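/- Let H = {c_h + G_h·α : α ∈ [-1,1]^p} be a zonotope in ℝ^n, let A ∈ ℝ^{n×n}, Δt > 0, c_p ∈ ℝ^n, and set Φ = e^{A·Δt} (matrix exponential). Let S = linComb(H, Φ·H + c_p) be the exact linear combination of H and the set {Φ·x + c_p : x ∈ H}, and let Ŝ be the zonotope with center 0.5·((I+Φ)·c_h + c_p) and generator matrix [0.5·((I−Φ)·c_h − c_p), 0.5·(I+Φ)·G_h, 0.5·(I−Φ)·G_h]. Then S ⊆ Ŝ and d_H(S, Ŝ) ≤ √p · ‖(Φ − I)·G_h‖₂, where ‖·‖₂ denotes the spectral (operator 2-) norm of a matrix. -/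

import Mathlib

open scoped Pointwise

/-- Matrix exponential. -/
noncomputable def mexp {n : ℕ} (A : Matrix (Fin n) (Fin n) ℝ) : Matrix (Fin n) (Fin n) ℝ :=
  NormedSpace.exp A

/-- Matrix-vector multiplication on Euclidean space. -/
noncomputable def mvE {m n : ℕ} (M : Matrix (Fin m) (Fin n) ℝ)
    (x : EuclideanSpace ℝ (Fin n)) : EuclideanSpace ℝ (Fin m) :=
  Matrix.toEuclideanLin M x

/-- Image of a set under a matrix: M·S = {M·s : s ∈ S}. -/
noncomputable def imgM {m n : ℕ} (M : Matrix (Fin m) (Fin n) ℝ)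
    (S : Set (EuclideanSpace ℝ (Fin n))) : Set (EuclideanSpace ℝ (Fin m)) :=
  mvE M '' S

/-- Zonotope with center `c` and generator matrix `G`. -/
noncomputable def zono {n p : ℕ} (c : EuclideanSpace ℝ (Fin n))
    (G : Matrix (Fin n) (Fin p) ℝ) : Set (EuclideanSpace ℝ (Fin n)) :=
  {x | ∃ α : EuclideanSpace ℝ (Fin p), (∀ i, α i ∈ Set.Icc (-1 : ℝ) 1) ∧ x = c + mvE G α}

/-- Linear combination of two sets. -/
def linComb {n : ℕ} (S1 S2 : Set (EuclideanSpace ℝ (Fin n))) :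
    Set (EuclideanSpace ℝ (Fin n)) :=
  {x | ∃ s1 ∈ S1, ∃ s2 ∈ S2, ∃ lam ∈ Set.Icc (0 : ℝ) 1, x = lam • s1 + (1 - lam) • s2}

/-- Tightest axis-aligned interval enclosure of a set. -/
noncomputable def box {n : ℕ} (S : Set (EuclideanSpace ℝ (Fin n))) :
    Set (EuclideanSpace ℝ (Fin n)) :=
  {x | ∀ i, x i ∈ Set.Icc (sInf ((fun y => y i) '' S)) (sSup ((fun y => y i) '' S))}

/-- Radius of the smallest origin-centered enclosing hypersphere. -/
noncomputable def rad {n : ℕ} (S : Set (EuclideanSpace ℝ (Fin n))) : ℝ :=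
  sSup ((fun x => ‖x‖) '' S)

/-- err(S) = rad(box(S)). -/
noncomputable def err {n : ℕ} (S : Set (EuclideanSpace ℝ (Fin n))) : ℝ := rad (box S)

/-- Spectral norm (operator 2-norm) of a matrix. -/
noncomputable def specNorm {m n : ℕ} (M : Matrix (Fin m) (Fin n) ℝ) : ℝ :=
  ‖LinearMap.toContinuousLinearMap (Matrix.toEuclideanLin M)‖

/-- Particular solution set P_U(t). -/
noncomputable def PU {n : ℕ} (U0 : Set (EuclideanSpace ℝ (Fin n)))
    (A : Matrix (Fin n) (Fin n) ℝ) (t : ℝ) : Set (EuclideanSpace ℝ (Fin n)) :=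
  {x | ∃ u : ℝ → EuclideanSpace ℝ (Fin n), Measurable u ∧ (∀ θ ∈ Set.Icc 0 t, u θ ∈ U0) ∧
    x = ∫ θ in (0 : ℝ)..t, mvE (mexp ((t - θ) • A)) (u θ)}

/-- Entrywise integral ∫₀^t e^{A·σ} dσ of the matrix exponential. -/
noncomputable def intExp {n : ℕ} (A : Matrix (Fin n) (Fin n) ℝ) (t : ℝ) :
    Matrix (Fin n) (Fin n) ℝ :=
  Matrix.of fun i j => ∫ σ in (0 : ℝ)..t, mexp (σ • A) i j

/-- Entrywise absolute value of a matrix. -/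
def entAbs {m n : ℕ} (M : Matrix (Fin m) (Fin n) ℝ) : Matrix (Fin m) (Fin n) ℝ :=
  Matrix.of fun i j => |M i j|

/-- Exponential remainder matrix E(Δt,η). -/
noncomputable def Eexp {n : ℕ} (A : Matrix (Fin n) (Fin n) ℝ) (dt : ℝ) (η : ℕ) :
    Matrix (Fin n) (Fin n) ℝ :=
  mexp (dt • entAbs A) -
    ∑ i ∈ Finset.range (η + 1), ((Nat.factorial i : ℝ)⁻¹) • (dt • entAbs A) ^ i

/-- Ã_i = A^i·Δt^{i+1}/(i+1)!. -/
noncomputable def Atilde {n : ℕ} (A : Matrix (Fin n) (Fin n) ℝ) (dt : ℝ) (i : ℕ) :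
    Matrix (Fin n) (Fin n) ℝ :=
  (dt ^ (i + 1) / (Nat.factorial (i + 1) : ℝ)) • A ^ i

/-- D(Δt) = {Δt·M·u : |M| ≤ E(Δt,η) entrywise, u ∈ U₀}. -/
noncomputable def Dset {n : ℕ} (A : Matrix (Fin n) (Fin n) ℝ) (dt : ℝ) (η : ℕ)
    (U0 : Set (EuclideanSpace ℝ (Fin n))) : Set (EuclideanSpace ℝ (Fin n)) :=
  {x | ∃ M : Matrix (Fin n) (Fin n) ℝ, (∀ i j, |M i j| ≤ Eexp A dt η i j) ∧
    ∃ u ∈ U0, x = dt • mvE M u}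

/-- P̂(Δt) = Ã_0·U₀ ⊕ … ⊕ Ã_η·U₀ ⊕ D(Δt). -/
noncomputable def PhatSet {n : ℕ} (A : Matrix (Fin n) (Fin n) ℝ) (dt : ℝ) (η : ℕ)
    (U0 : Set (EuclideanSpace ℝ (Fin n))) : Set (EuclideanSpace ℝ (Fin n)) :=
  (∑ i ∈ Finset.range (η + 1), imgM (Atilde A dt i) U0) + Dset A dt η U0

/-- One-step accumulating error bound ε̂(Δt). -/
noncomputable def ehatStep {n : ℕ} (A : Matrix (Fin n) (Fin n) ℝ) (t : ℝ) (η : ℕ)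
    (U0 : Set (EuclideanSpace ℝ (Fin n))) (dt : ℝ) : ℝ :=
  err (imgM (mexp (t • A)) (imgM (∑ i ∈ Finset.Icc 1 η, Atilde A dt i) U0 + Dset A dt η U0)) +
  err (imgM (mexp (t • A)) ((∑ i ∈ Finset.Icc 1 η, imgM (Atilde A dt i) U0) + Dset A dt η U0))

/-- Scalar interval I_i(Δt). -/
noncomputable def Iint (i : ℕ) (dt : ℝ) : Set ℝ :=
  Set.Icc (((i : ℝ) ^ (-(i : ℝ) / ((i : ℝ) - 1)) - (i : ℝ) ^ (-(1 : ℝ) / ((i : ℝ) - 1))) * dt ^ i) 0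

/-- Interval matrix F_x(Δt). -/
noncomputable def Fx {n : ℕ} (A : Matrix (Fin n) (Fin n) ℝ) (η : ℕ) (dt : ℝ) :
    Set (Matrix (Fin n) (Fin n) ℝ) :=
  {M | ∃ τ : ℕ → ℝ, (∀ i ∈ Finset.Icc 2 η, τ i ∈ Iint i dt) ∧
    ∃ R : Matrix (Fin n) (Fin n) ℝ, (∀ i j, |R i j| ≤ Eexp A dt η i j) ∧
    M = (∑ i ∈ Finset.Icc 2 η, (τ i / (Nat.factorial i : ℝ)) • A ^ i) + R}

/-- Interval matrix F_u(Δt). -/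
noncomputable def Fu {n : ℕ} (A : Matrix (Fin n) (Fin n) ℝ) (η : ℕ) (dt : ℝ) :
    Set (Matrix (Fin n) (Fin n) ℝ) :=
  {N | ∃ τ : ℕ → ℝ, (∀ i ∈ Finset.Icc 2 (η + 1), τ i ∈ Iint i dt) ∧
    ∃ R : Matrix (Fin n) (Fin n) ℝ, (∀ i j, |R i j| ≤ Eexp A dt η i j) ∧
    N = (∑ i ∈ Finset.Icc 2 (η + 1), (τ i / (Nat.factorial i : ℝ)) • A ^ (i - 1)) + dt • R}

/-- Curvature enclosure set C(Δt). -/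
noncomputable def Cset {n p : ℕ} (A : Matrix (Fin n) (Fin n) ℝ) (η : ℕ) (dt : ℝ)
    (ch : EuclideanSpace ℝ (Fin n)) (Gh : Matrix (Fin n) (Fin p) ℝ)
    (utld : EuclideanSpace ℝ (Fin n)) : Set (EuclideanSpace ℝ (Fin n)) :=
  {y | ∃ M ∈ Fx A η dt, ∃ N ∈ Fu A η dt, ∃ x ∈ zono ch Gh, y = mvE M x + mvE N utld}

/-- ε_hom(Δt). -/
noncomputable def ehom {n p : ℕ} (A : Matrix (Fin n) (Fin n) ℝ) (η : ℕ)
    (ch : EuclideanSpace ℝ (Fin n)) (Gh : Matrix (Fin n) (Fin p) ℝ)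
    (utld : EuclideanSpace ℝ (Fin n)) (dt : ℝ) : ℝ :=
  2 * err (Cset A η dt ch Gh utld) + Real.sqrt p * specNorm ((mexp (dt • A) - 1) * Gh)

/-- ε_U(Δt) = err(e^{A·t}·P̂(Δt)). -/
noncomputable def errPhat {n : ℕ} (A : Matrix (Fin n) (Fin n) ℝ) (t : ℝ) (η : ℕ)
    (U0 : Set (EuclideanSpace ℝ (Fin n))) (dt : ℝ) : ℝ :=
  err (imgM (mexp (t • A)) (PhatSet A dt η U0))

/- The enclosure comes from rewriting `λ s₁ + (1 - λ) s₂` around the midpoint `λ = 1/2`: with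
`s₁ = c + Gα`, `s₂ = Φ(c + Gα') + c_p` and `l = 2λ - 1`, the point equals
`½((I+Φ)c + c_p) + l·½((I-Φ)c - c_p) + ½(I+Φ)G β + ½(I-Φ)G γ` for `β = λα + (1-λ)α'` and
`γ = λα - (1-λ)α'`, which lie in the unit box. Conversely a point of the enclosure with
parameters `(l, β, γ)` differs from the point of `S` with `α = α' = β` and `λ = (1+l)/2` by
`½(I-Φ)G(γ - lβ)`, and `‖γ - lβ‖ ≤ 2√p`. -/

section LinCombEnclosure

variable {n p : ℕ}

lemma mvE_add {m : ℕ} (M : Matrix (Fin m) (Fin n) ℝ) (x y : EuclideanSpace ℝ (Fin n)) :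
    mvE M (x + y) = mvE M x + mvE M y := map_add _ _ _

lemma mvE_sub {m : ℕ} (M : Matrix (Fin m) (Fin n) ℝ) (x y : EuclideanSpace ℝ (Fin n)) :
    mvE M (x - y) = mvE M x - mvE M y := map_sub _ _ _

lemma mvE_smul {m : ℕ} (M : Matrix (Fin m) (Fin n) ℝ) (c : ℝ) (x : EuclideanSpace ℝ (Fin n)) :
    mvE M (c • x) = c • mvE M x := map_smul _ _ _

lemma add_mvE {m : ℕ} (M N : Matrix (Fin m) (Fin n) ℝ) (x : EuclideanSpace ℝ (Fin n)) :
    mvE (M + N) x = mvE M x + mvE N x := by simp [mvE]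

lemma sub_mvE {m : ℕ} (M N : Matrix (Fin m) (Fin n) ℝ) (x : EuclideanSpace ℝ (Fin n)) :
    mvE (M - N) x = mvE M x - mvE N x := by simp [mvE]

lemma smul_mvE {m : ℕ} (c : ℝ) (M : Matrix (Fin m) (Fin n) ℝ) (x : EuclideanSpace ℝ (Fin n)) :
    mvE (c • M) x = c • mvE M x := by simp [mvE]

lemma one_mvE (x : EuclideanSpace ℝ (Fin n)) : mvE 1 x = x := by simp [mvE]

lemma mul_mvE {m k : ℕ} (M : Matrix (Fin m) (Fin k) ℝ) (N : Matrix (Fin k) (Fin n) ℝ)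
    (x : EuclideanSpace ℝ (Fin n)) : mvE (M * N) x = mvE M (mvE N x) := by simp [mvE]

lemma specNorm_nonneg {m : ℕ} (M : Matrix (Fin m) (Fin n) ℝ) : 0 ≤ specNorm M := norm_nonneg _

lemma norm_mvE_le {m : ℕ} (M : Matrix (Fin m) (Fin n) ℝ) (x : EuclideanSpace ℝ (Fin n)) :
    ‖mvE M x‖ ≤ specNorm M * ‖x‖ :=
  (LinearMap.toContinuousLinearMap (Matrix.toEuclideanLin M)).le_opNorm x

lemma EuclideanSpace.norm_le_sqrt_card {ι : Type*} [Fintype ι] (x : EuclideanSpace ℝ ι)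
    (hx : ∀ i, x i ∈ Set.Icc (-1 : ℝ) 1) : ‖x‖ ≤ Real.sqrt (Fintype.card ι) := by
  rw [EuclideanSpace.norm_eq]
  refine Real.sqrt_le_sqrt ?_
  calc ∑ i, ‖x i‖ ^ 2 ≤ ∑ _i : ι, (1 : ℝ) := by
        gcongr with i
        exact pow_le_one₀ (norm_nonneg _) (abs_le.mpr (hx i))
    _ = Fintype.card ι := by simp

/-- The paper's `Ŝ` for a general matrix `Φ`, with the coefficient `lam` of its first generator
`½((I-Φ)c - c_p)` kept apart from those of the blocks `½(I±Φ)G`. -/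
def linCombZono (ch : EuclideanSpace ℝ (Fin n)) (Gh : Matrix (Fin n) (Fin p) ℝ)
    (Φ : Matrix (Fin n) (Fin n) ℝ) (cp : EuclideanSpace ℝ (Fin n)) :
    Set (EuclideanSpace ℝ (Fin n)) :=
  {x | ∃ lam : ℝ, ∃ β γ : EuclideanSpace ℝ (Fin p),
    lam ∈ Set.Icc (-1 : ℝ) 1 ∧ (∀ i, β i ∈ Set.Icc (-1 : ℝ) 1) ∧
    (∀ i, γ i ∈ Set.Icc (-1 : ℝ) 1) ∧
    x = (0.5 : ℝ) • (mvE (1 + Φ) ch + cp)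
      + lam • ((0.5 : ℝ) • (mvE (1 - Φ) ch - cp))
      + mvE ((0.5 : ℝ) • ((1 + Φ) * Gh)) β
      + mvE ((0.5 : ℝ) • ((1 - Φ) * Gh)) γ}

variable (ch : EuclideanSpace ℝ (Fin n)) (Gh : Matrix (Fin n) (Fin p) ℝ)
  (Φ : Matrix (Fin n) (Fin n) ℝ) (cp : EuclideanSpace ℝ (Fin n))

lemma linComb_subset_linCombZono :
    linComb (zono ch Gh) ((fun x => mvE Φ x + cp) '' zono ch Gh) ⊆ linCombZono ch Gh Φ cp := by
  rintro _ ⟨_, ⟨α, hα, rfl⟩, _, ⟨_, ⟨α', hα', rfl⟩, rfl⟩, t, ht, rfl⟩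
  have hcomb {a b : ℝ} (ha : a ∈ Set.Icc (-1 : ℝ) 1) (hb : b ∈ Set.Icc (-1 : ℝ) 1) :
      t * a + (1 - t) * b ∈ Set.Icc (-1 : ℝ) 1 :=
    convex_Icc (-1 : ℝ) 1 ha hb ht.1 (sub_nonneg.2 ht.2) (by ring)
  refine ⟨2 * t - 1, t • α + (1 - t) • α', t • α - (1 - t) • α', ?_, fun i => ?_, fun i => ?_, ?_⟩
  · constructor <;> linarith [ht.1, ht.2]
  · simpa using hcomb (hα i) (hα' i)
  · have hneg : -α' i ∈ Set.Icc (-1 : ℝ) 1 := ⟨by linarith [(hα' i).2], by linarith [(hα' i).1]⟩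
    simpa [sub_eq_add_neg] using hcomb (hα i) hneg
  · simp only [add_mvE, sub_mvE, smul_mvE, one_mvE, mul_mvE, mvE_add, mvE_sub, mvE_smul]
    module

lemma exists_mem_linComb_dist_le {x : EuclideanSpace ℝ (Fin n)}
    (hx : x ∈ linCombZono ch Gh Φ cp) :
    ∃ y ∈ linComb (zono ch Gh) ((fun x => mvE Φ x + cp) '' zono ch Gh),
      dist x y ≤ Real.sqrt p * specNorm ((Φ - 1) * Gh) := by
  obtain ⟨l, β, γ, hl, hβ, hγ, rfl⟩ := hx
  have hβH : ch + mvE Gh β ∈ zono ch Gh := ⟨β, hβ, rfl⟩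
  refine ⟨((1 + l) / 2) • (ch + mvE Gh β) + (1 - (1 + l) / 2) • (mvE Φ (ch + mvE Gh β) + cp),
    ⟨_, hβH, _, ⟨_, hβH, rfl⟩, (1 + l) / 2, ⟨by linarith [hl.1], by linarith [hl.2]⟩, rfl⟩, ?_⟩
  have hdiff : (0.5 : ℝ) • (mvE (1 + Φ) ch + cp) + l • ((0.5 : ℝ) • (mvE (1 - Φ) ch - cp))
        + mvE ((0.5 : ℝ) • ((1 + Φ) * Gh)) β + mvE ((0.5 : ℝ) • ((1 - Φ) * Gh)) γ
      - (((1 + l) / 2) • (ch + mvE Gh β) + (1 - (1 + l) / 2) • (mvE Φ (ch + mvE Gh β) + cp))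
      = (-(0.5 : ℝ)) • mvE ((Φ - 1) * Gh) (γ - l • β) := by
    simp only [add_mvE, sub_mvE, smul_mvE, one_mvE, mul_mvE, mvE_add, mvE_sub, mvE_smul]
    module
  have hγβ : ‖γ - l • β‖ ≤ 2 * Real.sqrt p := by
    have hγ' := EuclideanSpace.norm_le_sqrt_card γ hγ
    have hβ' := EuclideanSpace.norm_le_sqrt_card β hβ
    simp only [Fintype.card_fin] at hγ' hβ'
    calc ‖γ - l • β‖ ≤ ‖γ‖ + |l| * ‖β‖ := by
          simpa [norm_smul] using norm_sub_le γ (l • β)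
      _ ≤ Real.sqrt p + 1 * Real.sqrt p := by
          gcongr
          exact abs_le.mpr hl
      _ = 2 * Real.sqrt p := by ring
  calc dist _ _ = 0.5 * ‖mvE ((Φ - 1) * Gh) (γ - l • β)‖ := by
        rw [dist_eq_norm, hdiff, norm_smul]; norm_num
    _ ≤ 0.5 * (specNorm ((Φ - 1) * Gh) * (2 * Real.sqrt p)) := by
        gcongr
        exact (norm_mvE_le _ _).trans (mul_le_mul_of_nonneg_left hγβ (specNorm_nonneg _))
    _ = Real.sqrt p * specNorm ((Φ - 1) * Gh) := by ring

lemma hausdorffDist_linComb_linCombZono_le :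
    Metric.hausdorffDist (linComb (zono ch Gh) ((fun x => mvE Φ x + cp) '' zono ch Gh))
      (linCombZono ch Gh Φ cp) ≤ Real.sqrt p * specNorm ((Φ - 1) * Gh) := by
  have hr : 0 ≤ Real.sqrt p * specNorm ((Φ - 1) * Gh) :=
    mul_nonneg (Real.sqrt_nonneg _) (specNorm_nonneg _)
  refine Metric.hausdorffDist_le_of_mem_dist hr (fun x hx => ?_)
    (fun x hx => exists_mem_linComb_dist_le ch Gh Φ cp hx)
  exact ⟨x, linComb_subset_linCombZono ch Gh Φ cp hx, by simpa using hr⟩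

end LinCombEnclosure

theorem linComb_zono_enclosure_error_general {n p : ℕ} (A : Matrix (Fin n) (Fin n) ℝ)
    (dt : ℝ) (ch : EuclideanSpace ℝ (Fin n))
    (Gh : Matrix (Fin n) (Fin p) ℝ) (cp : EuclideanSpace ℝ (Fin n)) :
    linComb (zono ch Gh) ((fun x => mvE (mexp (dt • A)) x + cp) '' zono ch Gh) ⊆
      {x | ∃ lam : ℝ, ∃ β γ : EuclideanSpace ℝ (Fin p),
        lam ∈ Set.Icc (-1 : ℝ) 1 ∧ (∀ i, β i ∈ Set.Icc (-1 : ℝ) 1) ∧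
        (∀ i, γ i ∈ Set.Icc (-1 : ℝ) 1) ∧
        x = (0.5 : ℝ) • (mvE (1 + mexp (dt • A)) ch + cp)
          + lam • ((0.5 : ℝ) • (mvE (1 - mexp (dt • A)) ch - cp))
          + mvE ((0.5 : ℝ) • ((1 + mexp (dt • A)) * Gh)) β
          + mvE ((0.5 : ℝ) • ((1 - mexp (dt • A)) * Gh)) γ} ∧
    Metric.hausdorffDist
      (linComb (zono ch Gh) ((fun x => mvE (mexp (dt • A)) x + cp) '' zono ch Gh))
      {x | ∃ lam : ℝ, ∃ β γ : EuclideanSpace ℝ (Fin p),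
        lam ∈ Set.Icc (-1 : ℝ) 1 ∧ (∀ i, β i ∈ Set.Icc (-1 : ℝ) 1) ∧
        (∀ i, γ i ∈ Set.Icc (-1 : ℝ) 1) ∧
        x = (0.5 : ℝ) • (mvE (1 + mexp (dt • A)) ch + cp)
          + lam • ((0.5 : ℝ) • (mvE (1 - mexp (dt • A)) ch - cp))
          + mvE ((0.5 : ℝ) • ((1 + mexp (dt • A)) * Gh)) β
          + mvE ((0.5 : ℝ) • ((1 - mexp (dt • A)) * Gh)) γ}
      ≤ Real.sqrt p * specNorm ((mexp (dt • A) - 1) * Gh) :=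
  ⟨linComb_subset_linCombZono ch Gh _ cp, hausdorffDist_linComb_linCombZono_le ch Gh _ cp⟩

/-- error of the zonotope enclosure of the linear combination
`S = linComb(H, Φ·H + c_p)`. -/
theorem linComb_zono_enclosure_error {n p : ℕ} (A : Matrix (Fin n) (Fin n) ℝ)
    (dt : ℝ) (hdt : 0 < dt) (ch : EuclideanSpace ℝ (Fin n))
    (Gh : Matrix (Fin n) (Fin p) ℝ) (cp : EuclideanSpace ℝ (Fin n)) :
    linComb (zono ch Gh) ((fun x => mvE (mexp (dt • A)) x + cp) '' zono ch Gh) ⊆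
      {x | ∃ lam : ℝ, ∃ β γ : EuclideanSpace ℝ (Fin p),
        lam ∈ Set.Icc (-1 : ℝ) 1 ∧ (∀ i, β i ∈ Set.Icc (-1 : ℝ) 1) ∧
        (∀ i, γ i ∈ Set.Icc (-1 : ℝ) 1) ∧
        x = (0.5 : ℝ) • (mvE (1 + mexp (dt • A)) ch + cp)
          + lam • ((0.5 : ℝ) • (mvE (1 - mexp (dt • A)) ch - cp))
          + mvE ((0.5 : ℝ) • ((1 + mexp (dt • A)) * Gh)) β
          + mvE ((0.5 : ℝ) • ((1 - mexp (dt • A)) * Gh)) γ} ∧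
    Metric.hausdorffDist
      (linComb (zono ch Gh) ((fun x => mvE (mexp (dt • A)) x + cp) '' zono ch Gh))
      {x | ∃ lam : ℝ, ∃ β γ : EuclideanSpace ℝ (Fin p),
        lam ∈ Set.Icc (-1 : ℝ) 1 ∧ (∀ i, β i ∈ Set.Icc (-1 : ℝ) 1) ∧
        (∀ i, γ i ∈ Set.Icc (-1 : ℝ) 1) ∧
        x = (0.5 : ℝ) • (mvE (1 + mexp (dt • A)) ch + cp)
          + lam • ((0.5 : ℝ) • (mvE (1 - mexp (dt • A)) ch - cp))
          + mvE ((0.5 : ℝ) • ((1 + mexp (dt • A)) * Gh)) β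
          + mvE ((0.5 : ℝ) • ((1 - mexp (dt • A)) * Gh)) γ}
      ≤ Real.sqrt p * specNorm ((mexp (dt • A) - 1) * Gh) :=
  linComb_zono_enclosure_error_general A dt ch Gh cp
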